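/- Let X be a strongly 0-dimensional metrizable space. Then the set of all metrics d ∈ Met(X) whose range is contained in some closed totally disconnected subset of [0,∞) containing 0 (i.e., the union over S ∈ Z of Met(X; S)) is a dense Gδ subset of the space (Met(X), D_X). -/

import Mathlib

open Set
open scoped ENNReal

/-- The space `Met(X)` of metrics generating the topology of `X`. -/
def MetricCompat (X : Type*) [t : TopologicalSpace X] : Type _ :=
  { m : MetricSpace X // m.toUniformSpace.toTopologicalSpace = t }

namespace MetricCompat

variable {X : Type*} [TopologicalSpace X]

/-- The distance function of an element of `Met(X)`. -/
noncomputable def dist (d : MetricCompat X) (x y : X) : ℝ := d.1.dist x y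

/-- The supremum distance `D_X`, valued in `[0,∞]`. -/
noncomputable def supDist (d e : MetricCompat X) : ℝ≥0∞ :=
  ⨆ p : X × X, ENNReal.ofReal |d.dist p.1 p.2 - e.dist p.1 p.2|

/-- The topology on `Met(X)` induced by the open balls of `D_X`. -/
noncomputable instance : TopologicalSpace (MetricCompat X) :=
  TopologicalSpace.generateFrom
    { U | ∃ (d : MetricCompat X) (r : ℝ≥0∞), 0 < r ∧ U = { e | supDist d e < r } }

end MetricCompat

/-- A space is strongly `0`-dimensional if disjoint closed sets are separated by a clopen set. -/
def StronglyZeroDim (X : Type*) [TopologicalSpace X] : Prop :=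
  ∀ A B : Set X, IsClosed A → IsClosed B → Disjoint A B →
    ∃ V : Set X, IsClopen V ∧ A ⊆ V ∧ Disjoint V B

/-- The collection `Z` of closed totally disconnected subsets of `[0,∞)` containing `0`. -/
def ZFamily : Set (Set ℝ) :=
  { S | S ⊆ Set.Ici 0 ∧ IsClosed S ∧ IsTotallyDisconnected S ∧ (0 : ℝ) ∈ S }

/-!
Gδ: a metric has its values in a member of `Z` iff the closure of its value set is totally
disconnected, i.e. iff its values avoid a subinterval of every rational interval; each of these
countably many conditions survives perturbations that are small in `D_X`.

Density: a strongly `0`-dimensional paracompact space has locally finite clopen refinements of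
open covers, so for a compatible metric `d` there are locally constant maps `fₙ : X → X` with
`d(x, fₙ x) < ε 2⁻ⁿ`. Then `e(x, y) = ε 2^(-N(x, y)) + ε ⌈d(f₀ x, f₀ y) / ε⌉`, where `N(x, y)` is
the least `n` with `fₙ x ≠ fₙ y`, is a compatible metric with `D_X(d, e) ≤ 4ε` whose values lie
in the countable closed set `{0, ε 2⁻ⁿ} + εℕ`: the first summand carries the topology, the second
one the large-scale geometry of `d`.
-/

open Filter Topology
open scoped Pointwise

namespace MetricCompat

variable {X : Type*} [TopologicalSpace X]

lemma dist_nonneg (d : MetricCompat X) (x y : X) : 0 ≤ d.dist x y :=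
  @_root_.dist_nonneg X d.1.toPseudoMetricSpace x y

lemma supDist_self (d : MetricCompat X) : supDist d d = 0 := by
  simp [supDist]

lemma supDist_triangle (d e f : MetricCompat X) : supDist d f ≤ supDist d e + supDist e f := by
  refine iSup_le fun p => ?_
  calc ENNReal.ofReal |d.dist p.1 p.2 - f.dist p.1 p.2|
      ≤ ENNReal.ofReal |d.dist p.1 p.2 - e.dist p.1 p.2|
          + ENNReal.ofReal |e.dist p.1 p.2 - f.dist p.1 p.2| :=
        (ENNReal.ofReal_le_ofReal (abs_sub_le _ _ _)).trans ENNReal.ofReal_add_le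
    _ ≤ supDist d e + supDist e f := add_le_add (le_iSup_of_le p le_rfl) (le_iSup_of_le p le_rfl)

lemma supDist_le_ofReal {d e : MetricCompat X} {c : ℝ}
    (h : ∀ x y, |d.dist x y - e.dist x y| ≤ c) : supDist d e ≤ ENNReal.ofReal c :=
  iSup_le fun p => ENNReal.ofReal_le_ofReal (h p.1 p.2)

lemma abs_dist_sub_lt_of_supDist_lt {d e : MetricCompat X} {c : ℝ}
    (h : supDist d e < ENNReal.ofReal c) (x y : X) : |d.dist x y - e.dist x y| < c := by
  have hc : 0 < c := ENNReal.ofReal_pos.1 (pos_of_gt h)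
  exact (ENNReal.ofReal_lt_ofReal_iff hc).1 ((le_iSup_of_le (x, y) le_rfl).trans_lt h)

lemma isOpen_iff {U : Set (MetricCompat X)} :
    IsOpen U ↔ ∀ d ∈ U, ∃ r > 0, {e | supDist d e < r} ⊆ U := by
  refine ⟨fun hU => ?_, fun h => isOpen_iff_forall_mem_open.2 fun d hd => ?_⟩
  · induction hU with
    | basic V hV =>
      obtain ⟨d₀, r₀, -, rfl⟩ := hV
      intro d hd
      refine ⟨r₀ - supDist d₀ d, tsub_pos_of_lt hd, fun e he => ?_⟩
      calc supDist d₀ e ≤ supDist d₀ d + supDist d e := supDist_triangle _ _ _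
        _ < supDist d₀ d + (r₀ - supDist d₀ d) := ENNReal.add_lt_add_left hd.ne_top he
        _ = r₀ := add_tsub_cancel_of_le hd.le
    | univ => exact fun _ _ => ⟨1, one_pos, subset_univ _⟩
    | inter V W _ _ ihV ihW =>
      rintro d ⟨hdV, hdW⟩
      obtain ⟨r₁, hr₁, h₁⟩ := ihV d hdV
      obtain ⟨r₂, hr₂, h₂⟩ := ihW d hdW
      exact ⟨min r₁ r₂, lt_min hr₁ hr₂, fun e (he : supDist d e < min r₁ r₂) =>
        ⟨h₁ (he.trans_le (min_le_left _ _)), h₂ (he.trans_le (min_le_right _ _))⟩⟩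
    | sUnion S _ ih =>
      rintro d ⟨V, hV, hdV⟩
      obtain ⟨r, hr, h⟩ := ih V hV d hdV
      exact ⟨r, hr, h.trans (subset_sUnion_of_mem hV)⟩
  · obtain ⟨r, hr, hsub⟩ := h d hd
    exact ⟨_, hsub, TopologicalSpace.isOpen_generateFrom_of_mem ⟨d, r, hr, rfl⟩,
      by simpa [supDist_self] using hr⟩

lemma dense_of_forall_exists_supDist_lt {T : Set (MetricCompat X)}
    (h : ∀ d, ∀ ε : ℝ, 0 < ε → ∃ e ∈ T, supDist d e < ENNReal.ofReal ε) : Dense T := by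
  refine dense_iff_inter_open.2 fun U hU ⟨d, hd⟩ => ?_
  obtain ⟨r, hr, hsub⟩ := isOpen_iff.1 hU d hd
  obtain ⟨ε, -, hε, hεr⟩ := ENNReal.lt_iff_exists_real_btwn.1 hr
  obtain ⟨e, heT, hde⟩ := h d ε (ENNReal.ofReal_pos.1 hε)
  exact ⟨e, hsub (hde.trans hεr), heT⟩

end MetricCompat

lemma Real.isTotallyDisconnected_closure_iff {A : Set ℝ} :
    IsTotallyDisconnected (closure A) ↔
      ∀ p q : ℚ, p < q → ∃ a b : ℝ, (p : ℝ) ≤ a ∧ a < b ∧ b ≤ q ∧ Disjoint (Ioo a b) A := by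
  refine ⟨fun h p q hpq => ?_, fun h => isTotallyDisconnected_iff_lt.2 fun x _ y _ hxy => ?_⟩
  · have hpq' : (p : ℝ) < q := by exact_mod_cast hpq
    obtain ⟨z, hz, hzA⟩ : ∃ z ∈ Ioo (p : ℝ) q, z ∉ closure A := by
      by_contra! hsub
      obtain ⟨t, ht⟩ := exists_between hpq'
      obtain ⟨t', ht'⟩ := exists_between ht.2
      exact (h _ hsub isPreconnected_Ioo).not_nontrivial
        (nontrivial_of_lt ⟨ht.1, ht'.1.trans ht'.2⟩ ⟨ht.1.trans ht'.1, ht'.2⟩ ht'.1)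
    obtain ⟨c, hc, hball⟩ := Metric.isOpen_iff.1
      (isOpen_Ioo.inter isClosed_closure.isOpen_compl) z ⟨hz, hzA⟩
    rw [Real.ball_eq_Ioo] at hball
    obtain ⟨hpz, hzq⟩ := (Ioo_subset_Ioo_iff (by linarith)).1 (hball.trans inter_subset_left)
    exact ⟨z - c, z + c, hpz, by linarith, hzq,
      disjoint_left.2 fun t ht htA => (hball ht).2 (subset_closure htA)⟩
  · obtain ⟨p, hxp, hpy⟩ := exists_rat_btwn hxy
    obtain ⟨q, hpq, hqy⟩ := exists_rat_btwn hpy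
    obtain ⟨a, b, hpa, hab, hbq, hgap⟩ := h p q (by exact_mod_cast hpq)
    have hmid : (a + b) / 2 ∈ Ioo a b := ⟨by linarith, by linarith⟩
    exact ⟨(a + b) / 2, disjoint_left.1 (hgap.closure_right isOpen_Ioo) hmid,
      by linarith, by linarith⟩

namespace MetricCompat

variable {X : Type*} [TopologicalSpace X]

def values (d : MetricCompat X) : Set ℝ :=
  insert 0 {t | ∃ x y, d.dist x y = t}

lemma exists_mem_ZFamily_iff (d : MetricCompat X) :
    (∃ S ∈ ZFamily, ∀ x y, d.dist x y ∈ S) ↔ IsTotallyDisconnected (closure d.values) := by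
  have hvalues : ∀ S, (0 : ℝ) ∈ S → (∀ x y, d.dist x y ∈ S) → d.values ⊆ S := by
    rintro S h0 hS _ (rfl | ⟨x, y, rfl⟩)
    exacts [h0, hS x y]
  refine ⟨fun ⟨S, ⟨_, hSc, hStd, hS0⟩, hS⟩ t ht => hStd t (ht.trans ?_), fun h => ?_⟩
  · exact closure_minimal (hvalues S hS0 hS) hSc
  refine ⟨closure d.values, ⟨closure_minimal ?_ isClosed_Ici, isClosed_closure, h,
    subset_closure (mem_insert _ _)⟩, fun x y => subset_closure (mem_insert_of_mem _ ⟨x, y, rfl⟩)⟩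
  rintro _ (rfl | ⟨x, y, rfl⟩)
  exacts [self_mem_Ici, d.dist_nonneg x y]

def gapSet (p q : ℚ) : Set (MetricCompat X) :=
  {d | ∃ a b : ℝ, (p : ℝ) ≤ a ∧ a < b ∧ b ≤ q ∧ Disjoint (Ioo a b) d.values}

lemma isOpen_gapSet (p q : ℚ) : IsOpen (gapSet (X := X) p q) := by
  refine isOpen_iff.2 fun d ⟨a, b, hpa, hab, hbq, hgap⟩ => ?_
  refine ⟨ENNReal.ofReal ((b - a) / 3), ENNReal.ofReal_pos.2 (by positivity), fun e he =>
    ⟨a + (b - a) / 3, b - (b - a) / 3, by linarith, by linarith, by linarith, disjoint_left.2 ?_⟩⟩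
  rintro t ⟨hat, htb⟩ (rfl | ⟨x, y, rfl⟩)
  · exact disjoint_left.1 hgap ⟨by linarith, by linarith⟩ (mem_insert _ _)
  · have hxy := abs_lt.1 (abs_dist_sub_lt_of_supDist_lt he x y)
    exact disjoint_left.1 hgap ⟨by linarith [hxy.1], by linarith [hxy.2]⟩
      (mem_insert_of_mem _ ⟨x, y, rfl⟩)

lemma setOf_exists_mem_ZFamily_eq_iInter_gapSet :
    {d : MetricCompat X | ∃ S ∈ ZFamily, ∀ x y, d.dist x y ∈ S}
      = ⋂ (p : ℚ) (q : ℚ) (_ : p < q), gapSet p q := by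
  ext d
  simp only [mem_iInter]
  exact (exists_mem_ZFamily_iff d).trans Real.isTotallyDisconnected_closure_iff

end MetricCompat

lemma StronglyZeroDim.exists_clopen_refinement {X ι : Type*} [TopologicalSpace X]
    [ParacompactSpace X] [NormalSpace X] (hX : StronglyZeroDim X) {u : ι → Set X}
    (hu : ∀ i, IsOpen (u i)) (hcov : ⋃ i, u i = univ) :
    ∃ G : ι → Set X, (∀ i, IsClopen (G i)) ∧ LocallyFinite G ∧ (∀ i, G i ⊆ u i) ∧
      ⋃ i, G i = univ := by
  obtain ⟨v, hvo, hvcov, hvlf, hvu⟩ := precise_refinement u hu hcov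
  obtain ⟨w, hwcov, -, hwv⟩ := exists_iUnion_eq_closure_subset hvo hvlf.point_finite hvcov
  have hsep (i : ι) : ∃ G, IsClopen G ∧ closure (w i) ⊆ G ∧ G ⊆ v i := by
    obtain ⟨G, hG, hwG, hGv⟩ := hX _ _ isClosed_closure (hvo i).isClosed_compl
      (disjoint_compl_right_iff_subset.2 (hwv i))
    exact ⟨G, hG, hwG, disjoint_compl_right_iff_subset.1 hGv⟩
  choose G hG hwG hGv using hsep
  exact ⟨G, hG, hvlf.subset hGv, fun i => (hGv i).trans (hvu i),
    eq_univ_of_subset (iUnion_mono fun i => subset_closure.trans (hwG i)) hwcov⟩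

lemma LocallyFinite.exists_isLocallyConstant_mem {X ι : Type*} [TopologicalSpace X]
    {G : ι → Set X} (hlf : LocallyFinite G) (hG : ∀ i, IsClopen (G i)) (hcov : ⋃ i, G i = univ) :
    ∃ f : X → ι, IsLocallyConstant f ∧ ∀ x, x ∈ G (f x) := by
  let _ : LinearOrder ι := IsWellOrder.linearOrder WellOrderingRel
  have hwf : WellFounded ((· < ·) : ι → ι → Prop) := WellOrderingRel.isWellOrder.wf
  have hne (x : X) : {i | x ∈ G i}.Nonempty := mem_iUnion.1 (hcov ▸ mem_univ x)
  refine ⟨fun x => hwf.min _ (hne x), (IsLocallyConstant.iff_eventually_eq _).2 fun x => ?_,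
    fun x => hwf.min_mem _ (hne x)⟩
  filter_upwards [(hG _).isOpen.mem_nhds (hwf.min_mem _ (hne x)),
    hlf.iInter_compl_mem_nhds (fun i => (hG i).isClosed) x] with y hy hyG
  have hsub : {i | y ∈ G i} ⊆ {i | x ∈ G i} := fun i hi =>
    by_contra fun hxi => mem_iInter₂.1 hyG i hxi hi
  exact le_antisymm (hwf.min_le hy) (hwf.min_le (hsub (hwf.min_mem _ (hne y))))

lemma StronglyZeroDim.exists_isLocallyConstant_dist_lt {X : Type*} [MetricSpace X]
    (hX : StronglyZeroDim X) {δ : ℝ} (hδ : 0 < δ) :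
    ∃ f : X → X, IsLocallyConstant f ∧ ∀ x, dist x (f x) < δ := by
  obtain ⟨G, hG, hlf, hGball, hcov⟩ := hX.exists_clopen_refinement (fun x => Metric.isOpen_ball)
    (iUnion_eq_univ_iff.2 fun x => ⟨x, Metric.mem_ball_self hδ⟩)
  obtain ⟨f, hf, hfG⟩ := hlf.exists_isLocallyConstant_mem hG hcov
  exact ⟨f, hf, fun x => hGball _ (hfG x)⟩

lemma exists_mul_half_pow_lt {ε c : ℝ} (hε : 0 < ε) (hc : 0 < c) :
    ∃ n : ℕ, ε * (1 / 2) ^ n < c := by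
  obtain ⟨n, hn⟩ := exists_pow_lt_of_lt_one (div_pos hc hε) (by norm_num : (1 / 2 : ℝ) < 1)
  exact ⟨n, (lt_div_iff₀' hε).1 hn⟩

lemma mul_natCeil_div_mem_Ico {a ε : ℝ} (ha : 0 ≤ a) (hε : 0 < ε) :
    ε * ⌈a / ε⌉₊ ∈ Ico a (a + ε) := by
  constructor
  · rw [← div_le_iff₀' hε]
    exact Nat.le_ceil _
  · rw [← lt_div_iff₀' hε, add_div, div_self hε.ne']
    exact Nat.ceil_lt_add_one (by positivity)

def approxDistValues (ε : ℝ) : Set ℝ :=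
  insert 0 (range fun n : ℕ => ε * (1 / 2) ^ n) + range fun k : ℕ => ε * k

lemma approxDistValues_mem_ZFamily {ε : ℝ} (hε : 0 < ε) : approxDistValues ε ∈ ZFamily := by
  have hcompact : IsCompact (insert 0 (range fun n : ℕ => ε * (1 / 2) ^ n)) := by
    refine Tendsto.isCompact_insert_range ?_
    simpa using (tendsto_pow_atTop_nhds_zero_of_lt_one (by norm_num : (0 : ℝ) ≤ 1 / 2)
      (by norm_num)).const_mul ε
  have hclosed : IsClosed (range fun k : ℕ => ε * k) :=
    ((Homeomorph.mulLeft₀ ε hε.ne').isClosedEmbedding.comp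
      Nat.isClosedEmbedding_coe_real).isClosed_range
  refine ⟨?_, hclosed.add_left_of_isCompact hcompact, ?_,
    ⟨0, mem_insert _ _, 0, ⟨0, by simp⟩, by simp⟩⟩
  · rintro _ ⟨a, ha, _, ⟨k, rfl⟩, rfl⟩
    rcases ha with rfl | ⟨n, rfl⟩
    all_goals exact mem_Ici.2 (by positivity)
  · exact Set.Countable.isTotallyDisconnected
      ((countable_range _).insert 0 |>.image2 (countable_range _) _)

section approxDist

attribute [local instance] PiNat.dist

variable {X : Type*} [MetricSpace X] {f : ℕ → X → X} {ε : ℝ}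

/-- Through the local instance `PiNat.dist`, the first summand is `ε 2⁻ⁿ` for the least `n` with
`f n x ≠ f n y`. -/
noncomputable def approxDist (f : ℕ → X → X) (ε : ℝ) (x y : X) : ℝ :=
  ε * dist (fun n => f n x) (fun n => f n y) + ε * ⌈dist (f 0 x) (f 0 y) / ε⌉₊

lemma approxDist_self (x : X) : approxDist f ε x x = 0 := by
  simp [approxDist, PiNat.dist_self]

lemma approxDist_comm (x y : X) : approxDist f ε x y = approxDist f ε y x := by
  simp only [approxDist, PiNat.dist_comm, dist_comm]

lemma approxDist_triangle (hε : 0 < ε) (x y z : X) :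
    approxDist f ε x z ≤ approxDist f ε x y + approxDist f ε y z := by
  have hceil : ⌈dist (f 0 x) (f 0 z) / ε⌉₊
      ≤ ⌈dist (f 0 x) (f 0 y) / ε⌉₊ + ⌈dist (f 0 y) (f 0 z) / ε⌉₊ :=
    (Nat.ceil_mono (by rw [← add_div]; gcongr; exact dist_triangle _ _ _)).trans
      (Nat.ceil_add_le _ _)
  have hpi := PiNat.dist_triangle (fun n => f n x) (fun n => f n y) (fun n => f n z)
  calc approxDist f ε x z
      ≤ ε * (dist (fun n => f n x) (fun n => f n y) + dist (fun n => f n y) (fun n => f n z))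
        + ε * ((⌈dist (f 0 x) (f 0 y) / ε⌉₊ + ⌈dist (f 0 y) (f 0 z) / ε⌉₊ : ℕ) : ℝ) := by
        unfold approxDist; gcongr
    _ = approxDist f ε x y + approxDist f ε y z := by
        unfold approxDist; push_cast; ring

lemma mul_piNatDist_le_approxDist (hε : 0 < ε) (x y : X) :
    ε * dist (fun n => f n x) (fun n => f n y) ≤ approxDist f ε x y :=
  le_add_of_nonneg_right (by positivity)

lemma approxDist_le_of_forall_le_eq (hε : 0 ≤ ε) {x y : X} {n : ℕ}
    (h : ∀ i ≤ n, f i y = f i x) : approxDist f ε x y ≤ ε * (1 / 2) ^ n := by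
  have hcyl : (fun i => f i y) ∈ PiNat.cylinder (fun i => f i x) n :=
    PiNat.mem_cylinder_iff.2 fun i hi => h i hi.le
  rw [approxDist, h 0 (Nat.zero_le n), dist_self, zero_div, Nat.ceil_zero, Nat.cast_zero,
    mul_zero, add_zero, PiNat.dist_comm]
  exact mul_le_mul_of_nonneg_left (PiNat.mem_cylinder_iff_dist_le.1 hcyl) hε

lemma approxDist_mem_approxDistValues (x y : X) : approxDist f ε x y ∈ approxDistValues ε := by
  refine add_mem_add ?_ ⟨_, rfl⟩
  by_cases h : (fun n => f n x) = fun n => f n y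
  · rw [h, PiNat.dist_self, mul_zero]
    exact mem_insert _ _
  · rw [PiNat.dist_eq_of_ne h]
    exact mem_insert_of_mem _ ⟨_, rfl⟩

lemma dist_lt_of_approxDist_lt (hε : 0 < ε) {n : ℕ} {r : ℝ} (hfn : ∀ x, dist x (f n x) < r)
    {x y : X} (h : approxDist f ε x y < ε * (1 / 2) ^ n) : dist x y < 2 * r := by
  have hpi : dist (fun i => f i x) (fun i => f i y) < (1 / 2) ^ n :=
    lt_of_mul_lt_mul_left ((mul_piNatDist_le_approxDist hε x y).trans_lt h) hε.le
  have hfxy : f n x = f n y := PiNat.apply_eq_of_dist_lt hpi le_rfl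
  calc dist x y ≤ dist x (f n x) + dist y (f n y) := by
        rw [hfxy, dist_comm y]; exact dist_triangle _ _ _
    _ < 2 * r := by linarith [hfn x, hfn y]

lemma eq_of_approxDist_eq_zero (hε : 0 < ε) (hfd : ∀ n x, dist x (f n x) < ε * (1 / 2) ^ n)
    {x y : X} (h : approxDist f ε x y = 0) : x = y := by
  by_contra hne
  obtain ⟨n, hn⟩ := exists_mul_half_pow_lt hε (half_pos (dist_pos.2 hne))
  have := dist_lt_of_approxDist_lt hε (hfd n) (h.trans_lt (by positivity))
  linarith

lemma abs_approxDist_sub_dist_le (hε : 0 < ε) (hf₀ : ∀ x, dist x (f 0 x) < ε) (x y : X) :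
    |approxDist f ε x y - dist x y| ≤ 4 * ε := by
  have h₁ := dist_triangle4 (f 0 x) x y (f 0 y)
  have h₂ := dist_triangle4 x (f 0 x) (f 0 y) y
  rw [dist_comm (f 0 x) x] at h₁
  rw [dist_comm (f 0 y) y] at h₂
  have hceil := mul_natCeil_div_mem_Ico (dist_nonneg (x := f 0 x) (y := f 0 y)) hε
  have hpi₀ := mul_nonneg hε.le (PiNat.dist_nonneg (fun n => f n x) (fun n => f n y))
  have hpi₁ := mul_le_mul_of_nonneg_left
    (PiNat.dist_le_one (fun n => f n x) (fun n => f n y)) hε.le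
  rw [approxDist, abs_le]
  constructor <;> linarith [hceil.1, hceil.2, hf₀ x, hf₀ y]

lemma isOpen_iff_approxDist (hf : ∀ n, IsLocallyConstant (f n))
    (hfd : ∀ n x, dist x (f n x) < ε * (1 / 2) ^ n) (hε : 0 < ε) (s : Set X) :
    IsOpen s ↔ ∀ x ∈ s, ∃ δ > 0, ∀ y, approxDist f ε x y < δ → y ∈ s := by
  refine ⟨fun hs x hx => ?_, fun h => isOpen_iff_mem_nhds.2 fun x hx => ?_⟩
  · obtain ⟨γ, hγ, hball⟩ := Metric.isOpen_iff.1 hs x hx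
    obtain ⟨n, hn⟩ := exists_mul_half_pow_lt hε (half_pos hγ)
    refine ⟨ε * (1 / 2) ^ n, by positivity, fun y hy => hball ?_⟩
    rw [Metric.mem_ball, dist_comm]
    linarith [dist_lt_of_approxDist_lt hε (hfd n) hy]
  · obtain ⟨δ, hδ, hsub⟩ := h x hx
    obtain ⟨n, hn⟩ := exists_mul_half_pow_lt hε hδ
    have hnear : ∀ᶠ y in 𝓝 x, ∀ i ∈ {i | i ≤ n}, f i y = f i x :=
      (eventually_all_finite (finite_le_nat n)).2 fun i _ => (hf i).eventually_eq x
    filter_upwards [hnear] with y hy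
    exact hsub y ((approxDist_le_of_forall_le_eq hε.le hy).trans_lt hn)

end approxDist

lemma MetricCompat.exists_supDist_le_forall_dist_mem {X : Type*} [TopologicalSpace X]
    (hX : StronglyZeroDim X) (d : MetricCompat X) {ε : ℝ} (hε : 0 < ε) :
    ∃ e : MetricCompat X, supDist d e ≤ ENNReal.ofReal (4 * ε) ∧
      ∀ x y, e.dist x y ∈ approxDistValues ε := by
  obtain ⟨m, rfl⟩ := d
  let _ := m
  choose f hf hfd using fun n : ℕ =>
    hX.exists_isLocallyConstant_dist_lt (by positivity : 0 < ε * (1 / 2) ^ n)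
  refine ⟨⟨.ofDistTopology (approxDist f ε) approxDist_self approxDist_comm
    (approxDist_triangle hε) (isOpen_iff_approxDist hf hfd hε)
    fun _ _ => eq_of_approxDist_eq_zero hε hfd, rfl⟩,
    supDist_le_ofReal fun x y => ?_, fun x y => approxDist_mem_approxDistValues x y⟩
  rw [abs_sub_comm]
  exact abs_approxDist_sub_dist_le hε (by simpa using hfd 0) x y

theorem dense_Gδ_metrics_with_totally_disconnected_range
    {X : Type*} [TopologicalSpace X]
    (hX : StronglyZeroDim X) :
    Dense { d : MetricCompat X | ∃ S ∈ ZFamily, ∀ x y : X, d.dist x y ∈ S } ∧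
    IsGδ { d : MetricCompat X | ∃ S ∈ ZFamily, ∀ x y : X, d.dist x y ∈ S } := by
  refine ⟨MetricCompat.dense_of_forall_exists_supDist_lt fun d ε hε => ?_, ?_⟩
  · obtain ⟨e, hde, he⟩ := d.exists_supDist_le_forall_dist_mem hX (ε := ε / 8) (by positivity)
    refine ⟨e, ⟨_, approxDistValues_mem_ZFamily (by positivity), he⟩, hde.trans_lt ?_⟩
    exact (ENNReal.ofReal_lt_ofReal_iff hε).2 (by linarith)
  · rw [MetricCompat.setOf_exists_mem_ZFamily_eq_iInter_gapSet]
    exact .iInter fun p => .iInter fun q => .iInter fun _ => (MetricCompat.isOpen_gapSet p q).isGδ
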